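/- arXiv:2403.17318 — 3 statements merged into one kernel-verified Lean document; each statement's English description precedes it below -/
import Mathlib

section
/- For a random vector x ~ N(μ, Σ) on ℝⁿ with Σ positive definite, a deterministic symmetric positive definite matrix R with k-th column r, and p₂ ≥ 0, the expectation E[(e_kᵀ R x) exp(−p₂(1 + xᵀ R x))] equals c |S|^{−1/2} exp(−p₂) exp(bᵀS⁻¹b/4) · (rᵀS⁻¹b)/2, where S = (1/2)Σ⁻¹ + p₂R, b = Σ⁻¹μ, and c = 2^{−n/2}|Σ|^{−1/2} exp(−μᵀΣ⁻¹μ/2). -/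
/-!
Multiplying the Gaussian density by `exp (-p₂ xᵀRx)` gives again a Gaussian kernel: completing
the square, the exponent is a constant minus `(x - m)ᵀ S (x - m)` with `m = S⁻¹b / 2`. After the
shift `x ↦ x + m` the odd part `rᵀx` integrates to zero, leaving `rᵀm` times
`∫ exp (-yᵀSy) dy = |S|^{-1/2} π^{n/2}`, which follows from `S = BᵀB` and the substitution `z = By`.
-/

open Matrix MeasureTheory Real

/-- Density of the multivariate normal distribution `N(μ, Σ)` on `ℝⁿ`. -/
noncomputable def gaussDensity {n : ℕ} (μv : Fin n → ℝ)
    (Sig : Matrix (Fin n) (Fin n) ℝ) (x : Fin n → ℝ) : ℝ :=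
  (2 * Real.pi) ^ (-(n : ℝ) / 2) * Sig.det ^ (-(1 : ℝ) / 2) *
    Real.exp (-((x - μv) ⬝ᵥ (Sig⁻¹).mulVec (x - μv)) / 2)

section ChangeOfVariables

variable {ι E : Type*} [Fintype ι] [DecidableEq ι] [NormedAddCommGroup E] {M : Matrix ι ι ℝ}

lemma measurableEmbedding_mulVec (hM : M.det ≠ 0) : MeasurableEmbedding (M *ᵥ ·) := by
  have hinj : Function.Injective M.mulVec :=
    mulVec_injective_iff_isUnit.mpr ((isUnit_iff_isUnit_det M).mpr hM.isUnit)
  exact (LinearMap.isClosedEmbedding_of_injective (f := M.mulVecLin)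
    (LinearMap.ker_eq_bot.mpr hinj)).measurableEmbedding

lemma map_mulVec_volume (hM : M.det ≠ 0) :
    Measure.map (M *ᵥ ·) volume = ENNReal.ofReal |M.det|⁻¹ • volume := by
  simpa [toLin'_apply', coe_mulVecLin, abs_inv] using
    Real.map_matrix_volume_pi_eq_smul_volume_pi hM

lemma integral_comp_mulVec [NormedSpace ℝ E] (hM : M.det ≠ 0) (g : (ι → ℝ) → E) :
    ∫ y, g (M *ᵥ y) = |M.det|⁻¹ • ∫ z, g z := by
  rw [← (measurableEmbedding_mulVec hM).integral_map, map_mulVec_volume hM,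
    integral_smul_measure, ENNReal.toReal_ofReal (by positivity)]

lemma integrable_comp_mulVec_iff (hM : M.det ≠ 0) {g : (ι → ℝ) → E} :
    Integrable (fun y => g (M *ᵥ y)) ↔ Integrable g := by
  rw [← Function.comp_def, ← (measurableEmbedding_mulVec hM).integrable_map_iff,
    map_mulVec_volume hM, integrable_smul_measure (by simpa using hM) ENNReal.ofReal_ne_top]

end ChangeOfVariables

section StandardGaussian

variable {ι : Type*} [Fintype ι]

lemma exp_neg_sum_sq (z : ι → ℝ) : exp (-∑ i, z i ^ 2) = ∏ i, exp (-z i ^ 2) := by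
  rw [← exp_sum, Finset.sum_neg_distrib]

lemma integrable_exp_neg_sum_sq : Integrable (fun z : ι → ℝ => exp (-∑ i, z i ^ 2)) := by
  simp_rw [exp_neg_sum_sq]
  rw [volume_pi]
  exact Integrable.fintype_prod (f := fun _ t => exp (-t ^ 2)) fun _ => by
    simpa using integrable_exp_neg_mul_sq one_pos

lemma integrable_dotProduct_mul_exp_neg_sum_sq (w : ι → ℝ) :
    Integrable (fun z : ι → ℝ => (w ⬝ᵥ z) * exp (-∑ i, z i ^ 2)) := by
  classical
  have coord (i : ι) : Integrable (fun z : ι → ℝ => z i * exp (-∑ j, z j ^ 2)) := by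
    have hprod (z : ι → ℝ) : z i * exp (-∑ j, z j ^ 2) =
        ∏ j, (if j = i then z j else 1) * exp (-z j ^ 2) := by
      rw [Finset.prod_mul_distrib, Finset.prod_ite_eq', if_pos (Finset.mem_univ i),
        exp_neg_sum_sq]
    simp_rw [hprod]
    rw [volume_pi]
    refine Integrable.fintype_prod
      (f := fun j (t : ℝ) => (if j = i then t else 1) * exp (-t ^ 2)) fun j => ?_
    by_cases h : j = i
    · simpa [h] using integrable_mul_exp_neg_mul_sq one_pos
    · simpa [h] using integrable_exp_neg_mul_sq one_pos
  simp_rw [dotProduct, Finset.sum_mul, mul_assoc]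
  exact integrable_finsetSum _ fun i _ => (coord i).const_mul (w i)

lemma integral_exp_neg_sum_sq :
    ∫ z : ι → ℝ, exp (-∑ i, z i ^ 2) = π ^ ((Fintype.card ι : ℝ) / 2) := by
  have h1 : ∫ t : ℝ, exp (-t ^ 2) = √π := by simpa using integral_gaussian 1
  simp_rw [exp_neg_sum_sq]
  rw [volume_pi, integral_fintype_prod_eq_pow (fun t : ℝ => exp (-t ^ 2)), h1, sqrt_eq_rpow,
    ← rpow_natCast, ← rpow_mul pi_pos.le, one_div_mul_eq_div]

end StandardGaussian

lemma integral_eq_zero_of_odd {G F : Type*} [MeasurableSpace G] [AddGroup G] [MeasurableNeg G]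
    [NormedAddCommGroup F] [NormedSpace ℝ F] {μ : Measure G} [μ.IsNegInvariant] {f : G → F}
    (hf : ∀ x, f (-x) = -f x) : ∫ x, f x ∂μ = 0 := by
  have h := integral_neg_eq_self f μ
  simp_rw [hf, integral_neg] at h
  have h2 : (2 : ℝ) • ∫ x, f x ∂μ = 0 := by
    rw [two_smul]
    nth_rw 1 [← h]
    exact neg_add_cancel _
  exact (smul_eq_zero.mp h2).resolve_left two_ne_zero

section QuadraticForm

variable {ι : Type*} [Fintype ι] {S : Matrix ι ι ℝ}

lemma integral_dotProduct_mul_exp_neg_quadForm (r : ι → ℝ) :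
    ∫ y : ι → ℝ, (r ⬝ᵥ y) * exp (-(y ⬝ᵥ S *ᵥ y)) = 0 :=
  integral_eq_zero_of_odd fun y => by simp [mulVec_neg]

variable [DecidableEq ι]

open scoped MatrixOrder in
lemma Matrix.PosDef.exists_dotProduct_mulVec_eq_sum_sq (hS : S.PosDef) :
    ∃ B : Matrix ι ι ℝ, B.det ≠ 0 ∧ |B.det|⁻¹ = S.det ^ (-(1 : ℝ) / 2) ∧
      ∀ y, y ⬝ᵥ S *ᵥ y = ∑ i, (B *ᵥ y) i ^ 2 := by
  obtain ⟨B, rfl⟩ := CStarAlgebra.nonneg_iff_eq_star_mul_self.mp hS.posSemidef.nonneg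
  have hdet : (star B * B).det = |B.det| ^ (2 : ℝ) := by
    rw [det_mul, star_eq_conjTranspose, det_conjTranspose, star_trivial, rpow_two, sq_abs, sq]
  have hB : B.det ≠ 0 := fun h => by simpa [hdet, h] using hS.det_pos
  refine ⟨B, hB, ?_, fun y => ?_⟩
  · rw [hdet, ← rpow_mul (abs_nonneg _)]
    norm_num [rpow_neg_one]
  · rw [← mulVec_mulVec, dotProduct_mulVec, star_eq_conjTranspose,
      conjTranspose_eq_transpose_of_trivial, vecMul_transpose]
    simp [dotProduct, sq]

lemma integrable_exp_neg_quadForm (hS : S.PosDef) :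
    Integrable (fun y : ι → ℝ => exp (-(y ⬝ᵥ S *ᵥ y))) := by
  obtain ⟨B, hB, -, hquad⟩ := hS.exists_dotProduct_mulVec_eq_sum_sq
  simp_rw [hquad]
  exact (integrable_comp_mulVec_iff hB).mpr integrable_exp_neg_sum_sq

lemma integral_exp_neg_quadForm (hS : S.PosDef) :
    ∫ y : ι → ℝ, exp (-(y ⬝ᵥ S *ᵥ y)) =
      S.det ^ (-(1 : ℝ) / 2) * π ^ ((Fintype.card ι : ℝ) / 2) := by
  obtain ⟨B, hB, hdet, hquad⟩ := hS.exists_dotProduct_mulVec_eq_sum_sq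
  simp_rw [hquad]
  rw [integral_comp_mulVec hB (fun z => exp (-∑ i, z i ^ 2)), integral_exp_neg_sum_sq, hdet,
    smul_eq_mul]

lemma integrable_dotProduct_mul_exp_neg_quadForm (hS : S.PosDef) (r : ι → ℝ) :
    Integrable (fun y : ι → ℝ => (r ⬝ᵥ y) * exp (-(y ⬝ᵥ S *ᵥ y))) := by
  obtain ⟨B, hB, -, hquad⟩ := hS.exists_dotProduct_mulVec_eq_sum_sq
  have hr (y : ι → ℝ) : r ⬝ᵥ y = (B⁻¹ᵀ *ᵥ r) ⬝ᵥ (B *ᵥ y) := by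
    rw [mulVec_transpose, ← dotProduct_mulVec, mulVec_mulVec,
      nonsing_inv_mul B hB.isUnit, one_mulVec]
  simp_rw [hquad, hr]
  exact (integrable_comp_mulVec_iff hB).mpr (integrable_dotProduct_mul_exp_neg_sum_sq _)

lemma integral_dotProduct_mul_exp_neg_quadForm_sub (hS : S.PosDef) (r m : ι → ℝ) :
    ∫ x : ι → ℝ, (r ⬝ᵥ x) * exp (-((x - m) ⬝ᵥ S *ᵥ (x - m))) =
      (r ⬝ᵥ m) * (S.det ^ (-(1 : ℝ) / 2) * π ^ ((Fintype.card ι : ℝ) / 2)) := by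
  rw [← integral_add_right_eq_self _ m]
  simp_rw [add_sub_cancel_right, dotProduct_add, add_mul]
  rw [integral_add (integrable_dotProduct_mul_exp_neg_quadForm hS r)
      ((integrable_exp_neg_quadForm hS).const_mul _),
    integral_dotProduct_mul_exp_neg_quadForm, integral_const_mul, integral_exp_neg_quadForm hS,
    zero_add]

end QuadraticForm

section CompletingTheSquare

variable {ι : Type*} [Fintype ι]

lemma dotProduct_mulVec_sub_sub {M : Matrix ι ι ℝ} (hM : Mᵀ = M) (x m : ι → ℝ) :
    (x - m) ⬝ᵥ M *ᵥ (x - m) = x ⬝ᵥ M *ᵥ x - 2 * ((M *ᵥ m) ⬝ᵥ x) + m ⬝ᵥ M *ᵥ m := by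
  have hsymm : m ⬝ᵥ M *ᵥ x = (M *ᵥ m) ⬝ᵥ x := by
    rw [dotProduct_mulVec, ← mulVec_transpose, hM]
  rw [mulVec_sub, dotProduct_sub, sub_dotProduct, sub_dotProduct, hsymm,
    dotProduct_comm x (M *ᵥ m)]
  ring

variable [DecidableEq ι]

lemma dotProduct_mulVec_sub_half_inv_mulVec {S : Matrix ι ι ℝ} (hS : Sᵀ = S)
    (hdet : IsUnit S.det) (x b : ι → ℝ) :
    (x - (1 / 2 : ℝ) • S⁻¹ *ᵥ b) ⬝ᵥ S *ᵥ (x - (1 / 2 : ℝ) • S⁻¹ *ᵥ b) =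
      x ⬝ᵥ S *ᵥ x - b ⬝ᵥ x + b ⬝ᵥ S⁻¹ *ᵥ b / 4 := by
  have hcenter : S *ᵥ ((1 / 2 : ℝ) • S⁻¹ *ᵥ b) = (1 / 2 : ℝ) • b := by
    rw [mulVec_smul, mulVec_mulVec, mul_nonsing_inv S hdet, one_mulVec]
  rw [dotProduct_mulVec_sub_sub hS, hcenter, smul_dotProduct, dotProduct_smul,
    smul_dotProduct, dotProduct_comm _ b, smul_eq_mul, smul_eq_mul, smul_eq_mul]
  ring

lemma tilted_gaussian_exponent_eq {Q R S : Matrix ι ι ℝ} {μ b : ι → ℝ} {p : ℝ} (hQ : Qᵀ = Q)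
    (hS : S = (1 / 2 : ℝ) • Q + p • R) (hSt : Sᵀ = S) (hdet : IsUnit S.det) (hb : b = Q *ᵥ μ)
    (x : ι → ℝ) :
    -p * (1 + x ⬝ᵥ R *ᵥ x) + -((x - μ) ⬝ᵥ Q *ᵥ (x - μ)) / 2 =
      (-p + b ⬝ᵥ S⁻¹ *ᵥ b / 4 + -(μ ⬝ᵥ Q *ᵥ μ) / 2) +
        -((x - (1 / 2 : ℝ) • S⁻¹ *ᵥ b) ⬝ᵥ S *ᵥ (x - (1 / 2 : ℝ) • S⁻¹ *ᵥ b)) := by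
  rw [dotProduct_mulVec_sub_half_inv_mulVec hSt hdet, dotProduct_mulVec_sub_sub hQ, ← hb]
  conv_rhs => rw [hS]
  simp only [add_mulVec, smul_mulVec, dotProduct_add, dotProduct_smul, smul_eq_mul]
  ring

end CompletingTheSquare

lemma exp_mul_gaussDensity {n : ℕ} {μv b : Fin n → ℝ} {Sig R S : Matrix (Fin n) (Fin n) ℝ}
    {p : ℝ} (hSig : Sig.PosDef) (hS : S = (1 / 2 : ℝ) • Sig⁻¹ + p • R) (hSpos : S.PosDef)
    (hb : b = Sig⁻¹ *ᵥ μv) (x : Fin n → ℝ) :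
    exp (-p * (1 + x ⬝ᵥ R *ᵥ x)) * gaussDensity μv Sig x =
      (2 * π) ^ (-(n : ℝ) / 2) * Sig.det ^ (-(1 : ℝ) / 2) *
        exp (-p + b ⬝ᵥ S⁻¹ *ᵥ b / 4 + -(μv ⬝ᵥ Sig⁻¹ *ᵥ μv) / 2) *
        exp (-((x - (1 / 2 : ℝ) • S⁻¹ *ᵥ b) ⬝ᵥ S *ᵥ (x - (1 / 2 : ℝ) • S⁻¹ *ᵥ b))) := by
  have hexponent := tilted_gaussian_exponent_eq (by simpa using hSig.inv.isHermitian.eq) hS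
    (by simpa using hSpos.isHermitian.eq) hSpos.det_pos.ne'.isUnit hb x
  have hexp := congrArg exp hexponent
  rw [exp_add, exp_add] at hexp
  rw [gaussDensity]
  linear_combination (2 * π) ^ (-(n : ℝ) / 2) * Sig.det ^ (-(1 : ℝ) / 2) * hexp

theorem gaussian_expectation_first_general {n : ℕ} (μv : Fin n → ℝ)
    (Sig R : Matrix (Fin n) (Fin n) ℝ) (hSig : Sig.PosDef) (hR : R.PosDef)
    (k : Fin n) (p₂ : ℝ) (hp₂ : 0 ≤ p₂)
    (S : Matrix (Fin n) (Fin n) ℝ) (hS : S = (1 / 2 : ℝ) • Sig⁻¹ + p₂ • R)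
    (b : Fin n → ℝ) (hb : b = (Sig⁻¹).mulVec μv)
    (r : Fin n → ℝ) (hr : r = fun i => R i k)
    (c : ℝ) (hc : c = (2 : ℝ) ^ (-(n : ℝ) / 2) * Sig.det ^ (-(1 : ℝ) / 2) *
      Real.exp (-(μv ⬝ᵥ (Sig⁻¹).mulVec μv) / 2)) :
    ∫ x : Fin n → ℝ,
        (Pi.single k 1 ⬝ᵥ R.mulVec x) * Real.exp (-p₂ * (1 + x ⬝ᵥ R.mulVec x)) *
          gaussDensity μv Sig x =
      c * S.det ^ (-(1 : ℝ) / 2) * Real.exp (-p₂) *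
        Real.exp ((b ⬝ᵥ (S⁻¹).mulVec b) / 4) * ((r ⬝ᵥ (S⁻¹).mulVec b) / 2) := by
  have hSpos : S.PosDef :=
    hS ▸ (hSig.inv.smul (by norm_num)).add_posSemidef (hR.posSemidef.smul hp₂)
  have hrow (x : Fin n → ℝ) : Pi.single k 1 ⬝ᵥ R *ᵥ x = r ⬝ᵥ x := by
    rw [dotProduct_mulVec, single_vecMul, one_smul, hr]
    congr 1 with j
    simpa using hR.isHermitian.apply j k
  have h2π : (2 * π) ^ (-(n : ℝ) / 2) * π ^ ((n : ℝ) / 2) = 2 ^ (-(n : ℝ) / 2) := by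
    rw [mul_rpow two_pos.le pi_pos.le, mul_assoc, ← rpow_add pi_pos, neg_div, neg_add_cancel,
      rpow_zero, mul_one]
  calc _ = ∫ x, (2 * π) ^ (-(n : ℝ) / 2) * Sig.det ^ (-(1 : ℝ) / 2) *
          exp (-p₂ + b ⬝ᵥ S⁻¹ *ᵥ b / 4 + -(μv ⬝ᵥ Sig⁻¹ *ᵥ μv) / 2) * ((r ⬝ᵥ x) *
            exp (-((x - (1 / 2 : ℝ) • S⁻¹ *ᵥ b) ⬝ᵥ S *ᵥ (x - (1 / 2 : ℝ) • S⁻¹ *ᵥ b)))) := by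
        congr 1 with x
        rw [mul_assoc, exp_mul_gaussDensity hSig hS hSpos hb, hrow]
        ring
    _ = _ := by
      rw [integral_const_mul, integral_dotProduct_mul_exp_neg_quadForm_sub hSpos,
        Fintype.card_fin, dotProduct_smul, smul_eq_mul, hc, exp_add, exp_add]
      linear_combination (Sig.det ^ (-(1 : ℝ) / 2) * S.det ^ (-(1 : ℝ) / 2) * exp (-p₂) *
        exp (b ⬝ᵥ S⁻¹ *ᵥ b / 4) * exp (-(μv ⬝ᵥ Sig⁻¹ *ᵥ μv) / 2) * (r ⬝ᵥ S⁻¹ *ᵥ b) / 2) * h2π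

/-- First conditional MGF derivative identity:
`E[(e_kᵀ R x) exp(−p₂(1 + xᵀRx))] = c |S|^{−1/2} e^{−p₂} e^{bᵀS⁻¹b/4} (rᵀS⁻¹b)/2`
for `x ~ N(μ, Σ)`, `S = (1/2)Σ⁻¹ + p₂R`, `b = Σ⁻¹μ`,
`c = 2^{−n/2}|Σ|^{−1/2} exp(−μᵀΣ⁻¹μ/2)`, `r` the `k`-th column of `R`. -/
theorem gaussian_expectation_first {n : ℕ} (μv : Fin n → ℝ)
    (Sig R : Matrix (Fin n) (Fin n) ℝ) (hSig : Sig.PosDef) (hR : R.PosDef)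
    (hRsymm : Rᵀ = R) (k : Fin n) (p₂ : ℝ) (hp₂ : 0 ≤ p₂)
    (S : Matrix (Fin n) (Fin n) ℝ) (hS : S = (1 / 2 : ℝ) • Sig⁻¹ + p₂ • R)
    (b : Fin n → ℝ) (hb : b = (Sig⁻¹).mulVec μv)
    (r : Fin n → ℝ) (hr : r = fun i => R i k)
    (c : ℝ) (hc : c = (2 : ℝ) ^ (-(n : ℝ) / 2) * Sig.det ^ (-(1 : ℝ) / 2) *
      Real.exp (-(μv ⬝ᵥ (Sig⁻¹).mulVec μv) / 2)) :
    ∫ x : Fin n → ℝ,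
        (Pi.single k 1 ⬝ᵥ R.mulVec x) * Real.exp (-p₂ * (1 + x ⬝ᵥ R.mulVec x)) *
          gaussDensity μv Sig x =
      c * S.det ^ (-(1 : ℝ) / 2) * Real.exp (-p₂) *
        Real.exp ((b ⬝ᵥ (S⁻¹).mulVec b) / 4) * ((r ⬝ᵥ (S⁻¹).mulVec b) / 2) :=
  gaussian_expectation_first_general μv Sig R hSig hR k p₂ hp₂ S hS b hb r hr c hc
end

section
/- For x ~ N(μ, Σ) with Σ positive definite, R symmetric positive definite with k-th column r, and p₂ ≥ 0, E[(e_kᵀ R x)² exp(−p₂(1 + xᵀ R x))] = c |S|^{−1/2} exp(−p₂) exp(bᵀS⁻¹b/4) · ( rᵀS⁻¹r/2 + (rᵀS⁻¹b)²/4 ), with S = (1/2)Σ⁻¹ + p₂R, b = Σ⁻¹μ, c = 2^{−n/2}|Σ|^{−1/2} exp(−μᵀΣ⁻¹μ/2). -/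
/-!
After multiplying out, the integrand is a constant times `(r ⬝ᵥ x)² exp (-xᵀSx + bᵀx)` with `S`
positive definite. Completing the square (shifting `x` by `S⁻¹b/2`) and writing `S = CᵀC`, the
substitution `y = Cx` reduces everything to the moments of `exp (-|y|²)`, which factor over the
coordinates: `∫ (v ⬝ᵥ y + t)² exp (-|y|²) dy = π^{n/2} (|v|²/2 + t²)`.
-/

open Matrix MeasureTheory Real

section OneDimensional

open ProbabilityTheory

lemma integral_mul_exp_neg_sq_eq_integral_gaussianReal (f : ℝ → ℝ) :
    ∫ t, f t * exp (-t ^ 2) = √π * ∫ t, f t ∂gaussianReal 0 2⁻¹ := by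
  rw [integral_gaussianReal_eq_integral_smul (by norm_num), ← integral_const_mul]
  congr 1 with t
  rw [gaussianPDFReal_def, smul_eq_mul]
  norm_num
  field_simp

lemma integrable_pow_mul_exp_neg_sq (k : ℕ) : Integrable fun t : ℝ => t ^ k * exp (-t ^ 2) := by
  simpa [rpow_natCast] using integrable_rpow_mul_exp_neg_mul_sq one_pos (s := k)
    (neg_one_lt_zero.trans_le k.cast_nonneg)

lemma integral_exp_neg_sq : ∫ t : ℝ, exp (-t ^ 2) = √π := by
  simpa using integral_gaussian 1

lemma integral_mul_exp_neg_sq : ∫ t : ℝ, t * exp (-t ^ 2) = 0 := by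
  simp [integral_mul_exp_neg_sq_eq_integral_gaussianReal (fun t => t), integral_id_gaussianReal]

lemma integral_sq_mul_exp_neg_sq : ∫ t : ℝ, t ^ 2 * exp (-t ^ 2) = √π / 2 := by
  have hvar := variance_of_integral_eq_zero (X := fun t => t) aemeasurable_id'
    (integral_id_gaussianReal (μ := 0) (v := 2⁻¹))
  rw [variance_fun_id_gaussianReal] at hvar
  rw [integral_mul_exp_neg_sq_eq_integral_gaussianReal (· ^ 2), ← hvar]
  norm_num
  ring

end OneDimensional

section StandardGaussianMoments

variable {ι : Type*} [Fintype ι]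

lemma prod_pow_mul_exp_neg_dotProduct_self (a : ι → ℕ) (y : ι → ℝ) :
    (∏ i, y i ^ a i) * exp (-(y ⬝ᵥ y)) = ∏ i, y i ^ a i * exp (-y i ^ 2) := by
  simp [Finset.prod_mul_distrib, dotProduct, ← Finset.sum_neg_distrib, exp_sum, sq]

lemma integrable_prod_pow_mul_exp_neg_dotProduct_self (a : ι → ℕ) :
    Integrable fun y : ι → ℝ => (∏ i, y i ^ a i) * exp (-(y ⬝ᵥ y)) := by
  simp_rw [prod_pow_mul_exp_neg_dotProduct_self]
  exact Integrable.fintype_prod (f := fun i t => t ^ a i * exp (-t ^ 2))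
    fun i => integrable_pow_mul_exp_neg_sq (a i)

lemma integral_prod_pow_mul_exp_neg_dotProduct_self (a : ι → ℕ) :
    ∫ y : ι → ℝ, (∏ i, y i ^ a i) * exp (-(y ⬝ᵥ y)) =
      ∏ i, ∫ t : ℝ, t ^ a i * exp (-t ^ 2) := by
  simp_rw [prod_pow_mul_exp_neg_dotProduct_self]
  exact integral_fintype_prod_volume_eq_prod (fun i t => t ^ a i * exp (-t ^ 2))

lemma integrable_exp_neg_dotProduct_self : Integrable fun y : ι → ℝ => exp (-(y ⬝ᵥ y)) := by
  simpa using integrable_prod_pow_mul_exp_neg_dotProduct_self (0 : ι → ℕ)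

lemma integral_exp_neg_dotProduct_self :
    ∫ y : ι → ℝ, exp (-(y ⬝ᵥ y)) = √π ^ Fintype.card ι := by
  simpa [integral_exp_neg_sq] using integral_prod_pow_mul_exp_neg_dotProduct_self (0 : ι → ℕ)

lemma dotProduct_mul_exp_neg_dotProduct_self_eq_sum (v y : ι → ℝ) :
    (v ⬝ᵥ y) * exp (-(y ⬝ᵥ y)) = ∑ i, v i * (y i * exp (-(y ⬝ᵥ y))) := by
  simp only [dotProduct, Finset.sum_mul, mul_assoc]

lemma sq_dotProduct_mul_exp_neg_dotProduct_self_eq_sum (v y : ι → ℝ) :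
    (v ⬝ᵥ y) ^ 2 * exp (-(y ⬝ᵥ y)) = ∑ i, ∑ j, v i * v j * (y i * y j * exp (-(y ⬝ᵥ y))) := by
  rw [sq, dotProduct, Finset.sum_mul_sum, Finset.sum_mul]
  refine Finset.sum_congr rfl fun i _ => ?_
  rw [Finset.sum_mul]
  exact Finset.sum_congr rfl fun j _ => by ring

variable [DecidableEq ι]

lemma prod_pow_pi_single {M : Type*} [CommMonoid M] (y : ι → M) (i : ι) (k : ℕ) :
    ∏ l, y l ^ (Pi.single i k : ι → ℕ) l = y i ^ k := by
  simp [Pi.single_apply, pow_ite]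

lemma apply_eq_prod_pow_pi_single (y : ι → ℝ) (i : ι) :
    y i = ∏ l, y l ^ (Pi.single i 1 : ι → ℕ) l := by
  rw [prod_pow_pi_single, pow_one]

lemma apply_mul_apply_eq_prod_pow (y : ι → ℝ) (i j : ι) :
    y i * y j = ∏ l, y l ^ (Pi.single i 1 + Pi.single j 1 : ι → ℕ) l := by
  simp only [Pi.add_apply, pow_add, Finset.prod_mul_distrib, prod_pow_pi_single, pow_one]

lemma integrable_apply_mul_exp_neg_dotProduct_self (i : ι) :
    Integrable fun y : ι → ℝ => y i * exp (-(y ⬝ᵥ y)) := by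
  simp_rw [apply_eq_prod_pow_pi_single _ i]
  exact integrable_prod_pow_mul_exp_neg_dotProduct_self _

lemma integrable_apply_mul_apply_mul_exp_neg_dotProduct_self (i j : ι) :
    Integrable fun y : ι → ℝ => y i * y j * exp (-(y ⬝ᵥ y)) := by
  simp_rw [apply_mul_apply_eq_prod_pow _ i j]
  exact integrable_prod_pow_mul_exp_neg_dotProduct_self _

lemma integral_apply_mul_exp_neg_dotProduct_self (i : ι) :
    ∫ y : ι → ℝ, y i * exp (-(y ⬝ᵥ y)) = 0 := by
  simp_rw [apply_eq_prod_pow_pi_single _ i, integral_prod_pow_mul_exp_neg_dotProduct_self]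
  exact Finset.prod_eq_zero (Finset.mem_univ i) (by simp [integral_mul_exp_neg_sq])

lemma integral_apply_mul_apply_mul_exp_neg_dotProduct_self (i j : ι) :
    ∫ y : ι → ℝ, y i * y j * exp (-(y ⬝ᵥ y)) =
      if i = j then √π ^ Fintype.card ι / 2 else 0 := by
  split_ifs with hij
  · subst hij
    have hfactor (l : ι) : ∫ t : ℝ, t ^ (Pi.single i 2 : ι → ℕ) l * exp (-t ^ 2) =
        √π * if l = i then 2⁻¹ else 1 := by
      rcases eq_or_ne l i with rfl | hl
      · simp [integral_sq_mul_exp_neg_sq, div_eq_mul_inv]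
      · simp [hl, integral_exp_neg_sq]
    simp_rw [← sq, ← prod_pow_pi_single _ i 2, integral_prod_pow_mul_exp_neg_dotProduct_self,
      hfactor, Finset.prod_mul_distrib]
    simp [div_eq_mul_inv]
  · simp_rw [apply_mul_apply_eq_prod_pow _ i j, integral_prod_pow_mul_exp_neg_dotProduct_self]
    exact Finset.prod_eq_zero (Finset.mem_univ i) (by simp [hij, integral_mul_exp_neg_sq])

lemma integrable_dotProduct_mul_exp_neg_dotProduct_self (v : ι → ℝ) :
    Integrable fun y : ι → ℝ => (v ⬝ᵥ y) * exp (-(y ⬝ᵥ y)) := by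
  simp_rw [dotProduct_mul_exp_neg_dotProduct_self_eq_sum]
  exact integrable_finsetSum _ fun i _ =>
    (integrable_apply_mul_exp_neg_dotProduct_self i).const_mul _

lemma integrable_sq_dotProduct_mul_exp_neg_dotProduct_self (v : ι → ℝ) :
    Integrable fun y : ι → ℝ => (v ⬝ᵥ y) ^ 2 * exp (-(y ⬝ᵥ y)) := by
  simp_rw [sq_dotProduct_mul_exp_neg_dotProduct_self_eq_sum]
  exact integrable_finsetSum _ fun i _ => integrable_finsetSum _ fun j _ =>
    (integrable_apply_mul_apply_mul_exp_neg_dotProduct_self i j).const_mul _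

lemma integral_dotProduct_mul_exp_neg_dotProduct_self (v : ι → ℝ) :
    ∫ y : ι → ℝ, (v ⬝ᵥ y) * exp (-(y ⬝ᵥ y)) = 0 := by
  simp_rw [dotProduct_mul_exp_neg_dotProduct_self_eq_sum]
  rw [integral_finsetSum _ fun i _ => (integrable_apply_mul_exp_neg_dotProduct_self i).const_mul _]
  simp [integral_const_mul, integral_apply_mul_exp_neg_dotProduct_self]

lemma integral_sq_dotProduct_mul_exp_neg_dotProduct_self (v : ι → ℝ) :
    ∫ y : ι → ℝ, (v ⬝ᵥ y) ^ 2 * exp (-(y ⬝ᵥ y)) = √π ^ Fintype.card ι * (v ⬝ᵥ v / 2) := by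
  simp_rw [sq_dotProduct_mul_exp_neg_dotProduct_self_eq_sum]
  rw [integral_finsetSum _ fun i _ => integrable_finsetSum _ fun j _ =>
    (integrable_apply_mul_apply_mul_exp_neg_dotProduct_self i j).const_mul _]
  simp_rw [integral_finsetSum _ fun j _ =>
    (integrable_apply_mul_apply_mul_exp_neg_dotProduct_self _ j).const_mul _, integral_const_mul,
    integral_apply_mul_apply_mul_exp_neg_dotProduct_self]
  simp only [mul_ite, mul_zero, Finset.sum_ite_eq, Finset.mem_univ, if_true, dotProduct,
    Finset.sum_div, Finset.mul_sum]
  exact Finset.sum_congr rfl fun i _ => by ring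

lemma integral_sq_dotProduct_add_mul_exp_neg_dotProduct_self (v : ι → ℝ) (t : ℝ) :
    ∫ y : ι → ℝ, (v ⬝ᵥ y + t) ^ 2 * exp (-(y ⬝ᵥ y)) =
      √π ^ Fintype.card ι * (v ⬝ᵥ v / 2 + t ^ 2) := by
  have hexpand (y : ι → ℝ) : (v ⬝ᵥ y + t) ^ 2 * exp (-(y ⬝ᵥ y)) =
      (v ⬝ᵥ y) ^ 2 * exp (-(y ⬝ᵥ y)) +
        (2 * t * ((v ⬝ᵥ y) * exp (-(y ⬝ᵥ y))) + t ^ 2 * exp (-(y ⬝ᵥ y))) := by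
    ring
  have hlower : Integrable fun y : ι → ℝ =>
      2 * t * ((v ⬝ᵥ y) * exp (-(y ⬝ᵥ y))) + t ^ 2 * exp (-(y ⬝ᵥ y)) :=
    ((integrable_dotProduct_mul_exp_neg_dotProduct_self v).const_mul _).add
      (integrable_exp_neg_dotProduct_self.const_mul _)
  simp_rw [hexpand]
  rw [integral_add (integrable_sq_dotProduct_mul_exp_neg_dotProduct_self v) hlower,
    integral_add ((integrable_dotProduct_mul_exp_neg_dotProduct_self v).const_mul _)
      (integrable_exp_neg_dotProduct_self.const_mul _),
    integral_const_mul, integral_const_mul, integral_sq_dotProduct_mul_exp_neg_dotProduct_self,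
    integral_dotProduct_mul_exp_neg_dotProduct_self, integral_exp_neg_dotProduct_self]
  ring

end StandardGaussianMoments

section GaussianIntegral

variable {ι : Type*} [Fintype ι] [DecidableEq ι]

lemma integral_comp_mulVec_s9 (C : Matrix ι ι ℝ) (hC : C.det ≠ 0) (g : (ι → ℝ) → ℝ) :
    ∫ x, g (C *ᵥ x) = |C.det|⁻¹ * ∫ y, g y := by
  have hemb : MeasurableEmbedding (toLin' C) :=
    (LinearMap.equivOfDetNeZero (toLin' C) (by rwa [LinearMap.det_toLin'])).toContinuousLinearEquiv
      |>.toHomeomorph.measurableEmbedding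
  change ∫ x, g (toLin' C x) = _
  rw [← hemb.integral_map, Real.map_matrix_volume_pi_eq_smul_volume_pi hC, integral_smul_measure,
    ENNReal.toReal_ofReal (abs_nonneg _), smul_eq_mul, abs_inv]

lemma integral_sq_dotProduct_add_mul_exp_neg_transpose_mul_self (C : Matrix ι ι ℝ) (hC : C.det ≠ 0)
    (r : ι → ℝ) (t : ℝ) :
    ∫ x, (r ⬝ᵥ x + t) ^ 2 * exp (-(x ⬝ᵥ (Cᵀ * C) *ᵥ x)) =
      |C.det|⁻¹ * (√π ^ Fintype.card ι * (r ⬝ᵥ (Cᵀ * C)⁻¹ *ᵥ r / 2 + t ^ 2)) := by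
  have hCunit : IsUnit C.det := hC.isUnit
  set w := (C⁻¹)ᵀ *ᵥ r with hwdef
  have hw (x : ι → ℝ) : r ⬝ᵥ x = w ⬝ᵥ C *ᵥ x := by
    rw [hwdef, dotProduct_mulVec, ← vecMul_transpose, transpose_transpose, vecMul_vecMul,
      nonsing_inv_mul _ hCunit, vecMul_one]
  have hq (x : ι → ℝ) : x ⬝ᵥ (Cᵀ * C) *ᵥ x = C *ᵥ x ⬝ᵥ C *ᵥ x := by
    rw [← mulVec_mulVec, dotProduct_mulVec, vecMul_transpose]
  have hww : w ⬝ᵥ w = r ⬝ᵥ (Cᵀ * C)⁻¹ *ᵥ r := by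
    rw [hwdef, Matrix.mul_inv_rev, ← mulVec_mulVec, dotProduct_mulVec, ← transpose_nonsing_inv,
      vecMul_transpose, dotProduct_comm]
  calc ∫ x, (r ⬝ᵥ x + t) ^ 2 * exp (-(x ⬝ᵥ (Cᵀ * C) *ᵥ x))
      = ∫ x, (fun y => (w ⬝ᵥ y + t) ^ 2 * exp (-(y ⬝ᵥ y))) (C *ᵥ x) := by
        congr 1 with x
        rw [hw, hq]
    _ = _ := by
        rw [integral_comp_mulVec_s9 C hC fun y => (w ⬝ᵥ y + t) ^ 2 * exp (-(y ⬝ᵥ y)),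
          integral_sq_dotProduct_add_mul_exp_neg_dotProduct_self, hww]

open scoped MatrixOrder in
lemma Matrix.PosDef.exists_eq_transpose_mul_self {S : Matrix ι ι ℝ} (hS : S.PosDef) :
    ∃ C : Matrix ι ι ℝ, S = Cᵀ * C := by
  obtain ⟨C, hC⟩ := CStarAlgebra.nonneg_iff_eq_star_mul_self.mp hS.posSemidef.nonneg
  exact ⟨C, by rwa [star_eq_conjTranspose, conjTranspose_eq_transpose_of_trivial] at hC⟩

lemma integral_sq_dotProduct_add_mul_exp_neg_dotProduct_mulVec {S : Matrix ι ι ℝ} (hS : S.PosDef)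
    (r : ι → ℝ) (t : ℝ) :
    ∫ x, (r ⬝ᵥ x + t) ^ 2 * exp (-(x ⬝ᵥ S *ᵥ x)) =
      √π ^ Fintype.card ι * (√S.det)⁻¹ * (r ⬝ᵥ S⁻¹ *ᵥ r / 2 + t ^ 2) := by
  obtain ⟨C, rfl⟩ := hS.exists_eq_transpose_mul_self
  have hdet : (Cᵀ * C).det = C.det * C.det := by rw [det_mul, det_transpose]
  have hC : C.det ≠ 0 := fun h => hS.det_pos.ne' (by rw [hdet, h, mul_zero])
  rw [integral_sq_dotProduct_add_mul_exp_neg_transpose_mul_self C hC, hdet,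
    sqrt_mul_self_eq_abs]
  ring

lemma complete_square_dotProduct_mulVec {S : Matrix ι ι ℝ} (hS : S.IsSymm)
    (hdet : IsUnit S.det) (b x : ι → ℝ) :
    -((x + (2⁻¹ : ℝ) • S⁻¹ *ᵥ b) ⬝ᵥ S *ᵥ (x + (2⁻¹ : ℝ) • S⁻¹ *ᵥ b)) +
        b ⬝ᵥ (x + (2⁻¹ : ℝ) • S⁻¹ *ᵥ b) =
      -(x ⬝ᵥ S *ᵥ x) + b ⬝ᵥ S⁻¹ *ᵥ b / 4 := by
  set m := (2⁻¹ : ℝ) • S⁻¹ *ᵥ b with hm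
  have hSm : S *ᵥ m = (2⁻¹ : ℝ) • b := by
    rw [hm, mulVec_smul, mulVec_mulVec, mul_nonsing_inv _ hdet, one_mulVec]
  have hmS : m ⬝ᵥ S *ᵥ x = x ⬝ᵥ S *ᵥ m := by
    rw [dotProduct_mulVec, ← mulVec_transpose, hS.eq, dotProduct_comm]
  rw [mulVec_add, dotProduct_add, add_dotProduct, add_dotProduct, hmS, hSm]
  simp only [hm, dotProduct_smul, smul_dotProduct, dotProduct_add, smul_eq_mul,
    dotProduct_comm x b, dotProduct_comm (S⁻¹ *ᵥ b) b]
  ring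

lemma integral_sq_dotProduct_mul_exp_neg_dotProduct_mulVec_add {S : Matrix ι ι ℝ} (hS : S.PosDef)
    (b r : ι → ℝ) :
    ∫ x, (r ⬝ᵥ x) ^ 2 * exp (-(x ⬝ᵥ S *ᵥ x) + b ⬝ᵥ x) =
      √π ^ Fintype.card ι * (√S.det)⁻¹ * exp (b ⬝ᵥ S⁻¹ *ᵥ b / 4) *
        (r ⬝ᵥ S⁻¹ *ᵥ r / 2 + (r ⬝ᵥ S⁻¹ *ᵥ b) ^ 2 / 4) := by
  have hsymm : S.IsSymm := isHermitian_iff_isSymm.mp hS.isHermitian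
  have hshift (x : ι → ℝ) :
      (r ⬝ᵥ (x + (2⁻¹ : ℝ) • S⁻¹ *ᵥ b)) ^ 2 *
          exp (-((x + (2⁻¹ : ℝ) • S⁻¹ *ᵥ b) ⬝ᵥ S *ᵥ (x + (2⁻¹ : ℝ) • S⁻¹ *ᵥ b)) +
            b ⬝ᵥ (x + (2⁻¹ : ℝ) • S⁻¹ *ᵥ b)) =
        exp (b ⬝ᵥ S⁻¹ *ᵥ b / 4) *
          ((r ⬝ᵥ x + (r ⬝ᵥ S⁻¹ *ᵥ b) / 2) ^ 2 * exp (-(x ⬝ᵥ S *ᵥ x))) := by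
    rw [complete_square_dotProduct_mulVec hsymm hS.det_pos.ne'.isUnit, exp_add,
      dotProduct_add, dotProduct_smul, smul_eq_mul]
    ring
  rw [← integral_add_right_eq_self _ ((2⁻¹ : ℝ) • S⁻¹ *ᵥ b)]
  simp_rw [hshift]
  rw [integral_const_mul, integral_sq_dotProduct_add_mul_exp_neg_dotProduct_mulVec hS]
  ring

end GaussianIntegral

lemma exp_neg_mul_mul_gaussDensity {n : ℕ} (μv : Fin n → ℝ) {Sig : Matrix (Fin n) (Fin n) ℝ}
    (hSig : Sig.IsSymm) (R : Matrix (Fin n) (Fin n) ℝ) (p : ℝ) (x : Fin n → ℝ) :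
    exp (-p * (1 + x ⬝ᵥ R *ᵥ x)) * gaussDensity μv Sig x =
      (2 * π) ^ (-(n : ℝ) / 2) * Sig.det ^ (-(1 : ℝ) / 2) * exp (-(μv ⬝ᵥ Sig⁻¹ *ᵥ μv) / 2) *
        exp (-p) * exp (-(x ⬝ᵥ ((1 / 2 : ℝ) • Sig⁻¹ + p • R) *ᵥ x) + Sig⁻¹ *ᵥ μv ⬝ᵥ x) := by
  have hμx : μv ⬝ᵥ Sig⁻¹ *ᵥ x = Sig⁻¹ *ᵥ μv ⬝ᵥ x := by
    rw [dotProduct_mulVec, ← mulVec_transpose, hSig.inv.eq, dotProduct_comm]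
  have hexponent : -p * (1 + x ⬝ᵥ R *ᵥ x) + -((x - μv) ⬝ᵥ Sig⁻¹ *ᵥ (x - μv)) / 2 =
      -(μv ⬝ᵥ Sig⁻¹ *ᵥ μv) / 2 + -p +
        (-(x ⬝ᵥ ((1 / 2 : ℝ) • Sig⁻¹ + p • R) *ᵥ x) + Sig⁻¹ *ᵥ μv ⬝ᵥ x) := by
    simp only [mulVec_sub, dotProduct_sub, sub_dotProduct, add_mulVec, smul_mulVec, dotProduct_add,
      dotProduct_smul, smul_eq_mul, hμx, dotProduct_comm x (Sig⁻¹ *ᵥ μv)]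
    ring
  rw [gaussDensity, mul_left_comm, mul_assoc, ← exp_add, hexponent, exp_add, exp_add]
  ring

lemma two_mul_pi_rpow_neg_half_mul_sqrt_pi_pow (n : ℕ) :
    (2 * π) ^ (-(n : ℝ) / 2) * √π ^ n = 2 ^ (-(n : ℝ) / 2) := by
  rw [mul_rpow zero_le_two pi_pos.le, sqrt_eq_rpow, ← rpow_mul_natCast pi_pos.le, mul_assoc,
    ← rpow_add pi_pos, show -(n : ℝ) / 2 + 1 / 2 * n = 0 by ring, rpow_zero, mul_one]

/-- Second conditional MGF derivative identity:
`E[(e_kᵀRx)² exp(−p₂(1 + xᵀRx))]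
  = c |S|^{−1/2} e^{−p₂} e^{bᵀS⁻¹b/4} (rᵀS⁻¹r/2 + (rᵀS⁻¹b)²/4)`. -/
theorem gaussian_expectation_second {n : ℕ} (μv : Fin n → ℝ)
    (Sig R : Matrix (Fin n) (Fin n) ℝ) (hSig : Sig.PosDef) (hR : R.PosDef)
    (hRsymm : Rᵀ = R) (k : Fin n) (p₂ : ℝ) (hp₂ : 0 ≤ p₂)
    (S : Matrix (Fin n) (Fin n) ℝ) (hS : S = (1 / 2 : ℝ) • Sig⁻¹ + p₂ • R)
    (b : Fin n → ℝ) (hb : b = (Sig⁻¹).mulVec μv)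
    (r : Fin n → ℝ) (hr : r = fun i => R i k)
    (c : ℝ) (hc : c = (2 : ℝ) ^ (-(n : ℝ) / 2) * Sig.det ^ (-(1 : ℝ) / 2) *
      Real.exp (-(μv ⬝ᵥ (Sig⁻¹).mulVec μv) / 2)) :
    ∫ x : Fin n → ℝ,
        (Pi.single k 1 ⬝ᵥ R.mulVec x) ^ 2 * Real.exp (-p₂ * (1 + x ⬝ᵥ R.mulVec x)) *
          gaussDensity μv Sig x =
      c * S.det ^ (-(1 : ℝ) / 2) * Real.exp (-p₂) *
        Real.exp ((b ⬝ᵥ (S⁻¹).mulVec b) / 4) *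
        ((r ⬝ᵥ (S⁻¹).mulVec r) / 2 + (r ⬝ᵥ (S⁻¹).mulVec b) ^ 2 / 4) := by
  have hSpd : S.PosDef :=
    hS ▸ (hSig.inv.smul (by norm_num)).add_posSemidef (hR.posSemidef.smul hp₂)
  have hrx (x : Fin n → ℝ) : Pi.single k 1 ⬝ᵥ R *ᵥ x = r ⬝ᵥ x := by
    rw [single_dotProduct, one_mul, hr]
    exact congrArg (· ⬝ᵥ x) (congrFun hRsymm.symm k)
  have hdet : (√S.det)⁻¹ = S.det ^ (-(1 : ℝ) / 2) := by
    rw [sqrt_eq_rpow, ← rpow_neg hSpd.det_pos.le]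
    norm_num
  have hintegrand (x : Fin n → ℝ) :
      (Pi.single k 1 ⬝ᵥ R *ᵥ x) ^ 2 * exp (-p₂ * (1 + x ⬝ᵥ R *ᵥ x)) * gaussDensity μv Sig x =
        (2 * π) ^ (-(n : ℝ) / 2) * Sig.det ^ (-(1 : ℝ) / 2) * exp (-(μv ⬝ᵥ Sig⁻¹ *ᵥ μv) / 2) *
          exp (-p₂) * ((r ⬝ᵥ x) ^ 2 * exp (-(x ⬝ᵥ S *ᵥ x) + b ⬝ᵥ x)) := by
    rw [mul_assoc, exp_neg_mul_mul_gaussDensity μv (isHermitian_iff_isSymm.mp hSig.isHermitian),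
      hrx, ← hS, ← hb]
    ring
  simp_rw [hintegrand]
  rw [integral_const_mul, integral_sq_dotProduct_mul_exp_neg_dotProduct_mulVec_add hSpd,
    Fintype.card_fin, hc, ← two_mul_pi_rpow_neg_half_mul_sqrt_pi_pow, hdet]
  ring
end

section
/- Ratio entry formula for the pseudoinverse: let X ∈ ℝⁿˣᵐ have columns x₁,…,x_m, fix t, set V = Σ_{l≠t} x_l x_lᵀ, and assume V is invertible. Then XXᵀ is invertible and the (t,k) entry of X⁺ = Xᵀ(XXᵀ)⁻¹ equals (e_kᵀ V⁻¹ x_t)/(1 + x_tᵀ V⁻¹ x_t). -/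
/-!
Write `u` for the `t`-th column of `X`, so that `X Xᵀ = V + u uᵀ`. A positive semidefinite
invertible `V` is positive definite, hence so is `X Xᵀ`; in particular it is invertible and
`c = uᵀ V⁻¹ u ≥ 0`. Only the action of Sherman–Morrison on `u` is needed:
`(V + u uᵀ) V⁻¹ u = (1 + c) u` gives `(X Xᵀ)⁻¹ u = V⁻¹ u / (1 + c)`, and since `(X Xᵀ)⁻¹` is
symmetric, this vector is the `t`-th row of `Xᵀ (X Xᵀ)⁻¹`.
-/

open Matrix

namespace Matrix

variable {ι κ R : Type*}

theorem mul_transpose_eq_sum_vecMulVec [Fintype κ] [CommSemiring R] (X : Matrix ι κ R) :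
    X * Xᵀ = ∑ l, vecMulVec (fun i => X i l) (fun i => X i l) := by
  ext i j
  simp [mul_apply, Matrix.sum_apply, vecMulVec_apply]

theorem mul_transpose_eq_sum_sdiff_add_vecMulVec [Fintype κ] [DecidableEq κ] [CommSemiring R]
    (X : Matrix ι κ R) (t : κ) :
    X * Xᵀ = ∑ l ∈ Finset.univ \ {t}, vecMulVec (fun i => X i l) (fun i => X i l) +
      vecMulVec (fun i => X i t) (fun i => X i t) := by
  rw [mul_transpose_eq_sum_vecMulVec, Finset.sum_eq_sum_sdiff_singleton_add (Finset.mem_univ t)]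

theorem transpose_mul_apply_eq_mulVec_apply [Fintype ι] [CommSemiring R] {W : Matrix ι ι R}
    (hW : W.IsSymm) (X : Matrix ι κ R) (t : κ) (k : ι) :
    (Xᵀ * W) t k = (W *ᵥ fun i => X i t) k := by
  change ((fun i => X i t) ᵥ* W) k = _
  rw [← mulVec_transpose, hW.eq]

theorem smul_inv_add_vecMulVec_mulVec [Fintype ι] [DecidableEq ι] [CommRing R]
    {V : Matrix ι ι R} (hV : IsUnit V.det) (u v : ι → R) (hA : IsUnit (V + vecMulVec u v).det) :
    (1 + v ⬝ᵥ V⁻¹ *ᵥ u) • (V + vecMulVec u v)⁻¹ *ᵥ u = V⁻¹ *ᵥ u := by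
  have hAs : (V + vecMulVec u v) *ᵥ (V⁻¹ *ᵥ u) = (1 + v ⬝ᵥ V⁻¹ *ᵥ u) • u := by
    rw [add_mulVec, mulVec_mulVec, mul_nonsing_inv V hV, one_mulVec, vecMulVec_mulVec,
      op_smul_eq_smul, add_smul, one_smul]
  rw [← mulVec_smul, ← hAs, mulVec_mulVec, nonsing_inv_mul _ hA, one_mulVec]

theorem posSemidef_sum_vecMulVec_self [Fintype ι] (s : Finset κ) (x : κ → ι → ℝ) :
    (∑ l ∈ s, vecMulVec (x l) (x l)).PosSemidef :=
  posSemidef_sum s fun l _ => by simpa using posSemidef_vecMulVec_self_star (x l)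

end Matrix

/-- Ratio entry formula for the pseudoinverse: with
`V = Σ_{l≠t} x_l x_lᵀ` invertible, `XXᵀ` is invertible and
`(X⁺)_{tk} = (e_kᵀ V⁻¹ x_t)/(1 + x_tᵀ V⁻¹ x_t)` where `X⁺ = Xᵀ(XXᵀ)⁻¹`. -/
theorem pseudoinverse_entry_ratio {n m : ℕ} (X : Matrix (Fin n) (Fin m) ℝ)
    (t : Fin m) (k : Fin n)
    (V : Matrix (Fin n) (Fin n) ℝ)
    (hV : V = ∑ l ∈ Finset.univ \ {t}, vecMulVec (fun i => X i l) (fun i => X i l))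
    (hVinv : IsUnit V.det) :
    IsUnit (X * Xᵀ).det ∧
    (Xᵀ * (X * Xᵀ)⁻¹) t k =
      (Pi.single k 1 ⬝ᵥ (V⁻¹).mulVec (fun i => X i t)) /
        (1 + (fun i => X i t) ⬝ᵥ (V⁻¹).mulVec (fun i => X i t)) := by
  set u : Fin n → ℝ := fun i => X i t
  have hXX : X * Xᵀ = V + vecMulVec u u := by
    rw [hV, mul_transpose_eq_sum_sdiff_add_vecMulVec X t]
  have hVpsd : V.PosSemidef := hV ▸ posSemidef_sum_vecMulVec_self _ _
  have hVpd : V.PosDef := hVpsd.posDef_iff_isUnit.2 ((isUnit_iff_isUnit_det V).2 hVinv)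
  have hXXpd : (X * Xᵀ).PosDef :=
    hXX ▸ hVpd.add_posSemidef (by simpa using posSemidef_vecMulVec_self_star u)
  have hXXinv : IsUnit (X * Xᵀ).det := (isUnit_iff_isUnit_det _).1 hXXpd.isUnit
  refine ⟨hXXinv, ?_⟩
  have hc : 0 ≤ u ⬝ᵥ V⁻¹ *ᵥ u := by simpa using hVpsd.inv.dotProduct_mulVec_nonneg u
  have hsymm : (X * Xᵀ).IsSymm := by rw [IsSymm, transpose_mul, transpose_transpose]
  have hk := congrFun (smul_inv_add_vecMulVec_mulVec hVinv u u (hXX ▸ hXXinv)) k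
  rw [Pi.smul_apply, smul_eq_mul] at hk
  rw [transpose_mul_apply_eq_mulVec_apply hsymm.inv, single_one_dotProduct, hXX, ← hk,
    mul_div_cancel_left₀ _ (by positivity)]
end
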